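/- Let S, A be finite nonempty sets, r : S × A → ℝ, P : S × A → (S → ℝ) with P(s,a)(s') ≥ 0 and ∑_{s'} P(s,a)(s') = 1, π : S → (A → ℝ) with π(s)(a) > 0 and ∑_a π(s)(a) = 1, and let 0 ≤ γ < 1 and α ≥ 0. Let T_H^π be the soft distributional Bellman operator (T_H^π Z)(s,a) = ∑_{s',a'} P(s,a)(s')·π(s')(a')·(x ↦ r(s,a) + γ(x − α·log π(s')(a')))_*(Z(s',a')). Suppose Z* is a family of Borel probability measures on ℝ with finite first moments satisfying T_H^π Z* = Z* (equality of measures at every (s,a)), and let (Z_k)_{k≥0} be defined by Z_{k+1} = T_H^π Z_k from an initial family Z₀ with finite first moments. Then max_{(s,a)} d_e(Z_k(s,a), Z*(s,a)) ≤ γ^k · max_{(s,a)} d_e(Z₀(s,a), Z*(s,a)) for all k, and in particular max_{(s,a)} d_e(Z_k(s,a), Z*(s,a)) → 0 as k → ∞. -/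

import Mathlib

open MeasureTheory ProbabilityTheory Filter
open scoped ENNReal Topology

/-!
The energy distance is the squared `L²` distance of the CDFs. The CDF of `T_H^π Z (s,a)` at `t`
is the convex combination, with weights `P(s,a)(s') π(s')(a')`, of the CDFs of `Z (s',a')`
evaluated at `(t - r(s,a)) / γ + α log π(s')(a')`. Jensen's inequality for the square moves the
square inside the combination, and the affine change of variables contributes a factor `γ`, so
`T_H^π` is a `γ`-contraction for the supremal energy distance; iterating it against the fixed point
gives the geometric bound. The limit needs the initial distance to be finite: `|F_μ - 1_{[0,∞)}|`
integrates to the first absolute moment of `μ`, and the triangle inequality through `δ₀` bounds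
`d_e(μ, ν)` by the sum of the two first moments.
-/

/-- The energy distance (squared Cramér distance) between two measures on `ℝ`. -/
noncomputable def energyDist (μ ν : Measure ℝ) : ℝ≥0∞ :=
  ∫⁻ x, ENNReal.ofReal ((cdf μ x - cdf ν x) ^ 2)

/-- The soft distributional Bellman operator: `(T_H^π Z)(s,a)` is the mixture over
successor pairs `(s',a')` of the pushforward of `Z(s',a')` under
`x ↦ r(s,a) + γ(x − α log π(s')(a'))`. -/
noncomputable def softDistBellman {S A : Type*} [Fintype S] [Fintype A]
    (r : S × A → ℝ) (P : S × A → S → ℝ) (pol : S → A → ℝ) (γ α : ℝ)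
    (Z : S × A → Measure ℝ) : S × A → Measure ℝ := fun p =>
  ∑ s' : S, ∑ a' : A,
    ENNReal.ofReal (P p s' * pol s' a') •
      Measure.map (fun x => r p + γ * (x - α * Real.log (pol s' a'))) (Z (s', a'))

open Set

@[fun_prop]
lemma measurable_cdf (μ : Measure ℝ) : Measurable (cdf μ) := (cdf μ).mono.measurable

lemma ofReal_abs_cdf_sub_indicator_Ici_zero (μ : Measure ℝ) [IsProbabilityMeasure μ] (x : ℝ) :
    ENNReal.ofReal |cdf μ x - (Ici 0).indicator 1 x| =
      μ {y | y ≤ x ∧ x < 0 ∨ 0 ≤ x ∧ x < y} := by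
  rcases lt_or_ge x 0 with hx | hx
  · have hset : {y | y ≤ x ∧ x < 0 ∨ 0 ≤ x ∧ x < y} = Iic x := by
      ext y; simp [hx, hx.not_ge]
    rw [indicator_of_notMem (notMem_Ici.2 hx), sub_zero, abs_of_nonneg (cdf_nonneg μ x), hset,
      cdf_eq_real, ofReal_measureReal]
  · have hset : {y | y ≤ x ∧ x < 0 ∨ 0 ≤ x ∧ x < y} = (Iic x)ᶜ := by
      ext y; simp [hx, hx.not_gt]
    rw [indicator_of_mem (mem_Ici.2 hx), Pi.one_apply, abs_sub_comm,
      abs_of_nonneg (sub_nonneg.2 (cdf_le_one μ x)), hset, cdf_eq_real,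
      ← probReal_compl_eq_one_sub measurableSet_Iic, ofReal_measureReal]

lemma lintegral_measure_between_zero_eq (μ : Measure ℝ) [SFinite μ] :
    ∫⁻ x, μ {y | y ≤ x ∧ x < 0 ∨ 0 ≤ x ∧ x < y} = ∫⁻ y, ENNReal.ofReal |y| ∂μ := by
  set E : Set (ℝ × ℝ) := {q | q.2 ≤ q.1 ∧ q.1 < 0 ∨ 0 ≤ q.1 ∧ q.1 < q.2}
  have hE : MeasurableSet E := by measurability
  calc ∫⁻ x, μ {y | y ≤ x ∧ x < 0 ∨ 0 ≤ x ∧ x < y} = volume.prod μ E :=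
        (Measure.prod_apply hE).symm
    _ = ∫⁻ y, volume ((fun x => (x, y)) ⁻¹' E) ∂μ := Measure.prod_apply_symm hE
    _ = ∫⁻ y, ENNReal.ofReal |y| ∂μ := by
      refine lintegral_congr fun y => ?_
      rcases lt_or_ge y 0 with hy | hy
      · have : (fun x => (x, y)) ⁻¹' E = Ico y 0 := by
          ext x; simp only [E, mem_preimage, mem_ofPred_eq, mem_Ico]; grind
        rw [this, Real.volume_Ico, abs_of_neg hy, zero_sub]
      · have : (fun x => (x, y)) ⁻¹' E = Ico 0 y := by
          ext x; simp only [E, mem_preimage, mem_ofPred_eq, mem_Ico]; grind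
        rw [this, Real.volume_Ico, abs_of_nonneg hy, sub_zero]

lemma energyDist_lt_top (μ ν : Measure ℝ) [IsProbabilityMeasure μ] [IsProbabilityMeasure ν]
    (hμ : Integrable (fun x : ℝ => x) μ) (hν : Integrable (fun x : ℝ => x) ν) :
    energyDist μ ν < ∞ := by
  set H : ℝ → ℝ := (Ici 0).indicator 1
  have hpt : ∀ x, ENNReal.ofReal ((cdf μ x - cdf ν x) ^ 2) ≤
      ENNReal.ofReal |cdf μ x - H x| + ENNReal.ofReal |cdf ν x - H x| := by
    intro x
    have hsq : (cdf μ x - cdf ν x) ^ 2 ≤ |cdf μ x - cdf ν x| := by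
      rw [← sq_abs]
      have : |cdf μ x - cdf ν x| ≤ 1 := abs_sub_le_iff.2
        ⟨by linarith [cdf_le_one μ x, cdf_nonneg ν x], by linarith [cdf_le_one ν x, cdf_nonneg μ x]⟩
      nlinarith [abs_nonneg (cdf μ x - cdf ν x)]
    calc ENNReal.ofReal ((cdf μ x - cdf ν x) ^ 2)
        ≤ ENNReal.ofReal (|cdf μ x - H x| + |cdf ν x - H x|) :=
          ENNReal.ofReal_le_ofReal <| hsq.trans <|
            (abs_sub_le _ (H x) _).trans_eq (by rw [abs_sub_comm (H x)])
      _ ≤ _ := ENNReal.ofReal_add_le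
  have hfirst : ∀ (m : Measure ℝ) [IsProbabilityMeasure m], Integrable (fun x : ℝ => x) m →
      ∫⁻ x, ENNReal.ofReal |cdf m x - H x| < ∞ := by
    intro m _ hm
    simp_rw [H, ofReal_abs_cdf_sub_indicator_Ici_zero, lintegral_measure_between_zero_eq,
      ← Real.enorm_eq_ofReal_abs]
    exact hm.2
  calc energyDist μ ν ≤ ∫⁻ x, (ENNReal.ofReal |cdf μ x - H x| + ENNReal.ofReal |cdf ν x - H x|) :=
        lintegral_mono hpt
    _ = (∫⁻ x, ENNReal.ofReal |cdf μ x - H x|) + ∫⁻ x, ENNReal.ofReal |cdf ν x - H x| :=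
        lintegral_add_left ((measurable_cdf μ).sub
          (measurable_const.indicator measurableSet_Ici)).abs.ennreal_ofReal _
    _ < ∞ := ENNReal.add_lt_top.2 ⟨hfirst μ hμ, hfirst ν hν⟩

lemma cdf_map_add_mul_sub {γ : ℝ} (hγ : 0 < γ) (μ : Measure ℝ) [IsProbabilityMeasure μ]
    (b c t : ℝ) : cdf (μ.map fun x => b + γ * (x - c)) t = cdf μ ((t - b) / γ + c) := by
  have := Measure.isProbabilityMeasure_map (μ := μ) (f := fun x => b + γ * (x - c)) (by fun_prop)
  have hpre : (fun x => b + γ * (x - c)) ⁻¹' Iic t = Iic ((t - b) / γ + c) := by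
    ext x
    rw [mem_preimage, mem_Iic, mem_Iic, ← sub_le_iff_le_add, le_div_iff₀ hγ, mul_comm,
      le_sub_iff_add_le']
  rw [cdf_eq_real, cdf_eq_real, map_measureReal_apply (by fun_prop) measurableSet_Iic, hpre]

lemma lintegral_comp_inv_mul_add {f : ℝ → ℝ≥0∞} (hf : Measurable f) {a : ℝ} (ha : 0 < a)
    (e : ℝ) : ∫⁻ x, f (a⁻¹ * x + e) = ENNReal.ofReal a * ∫⁻ x, f x := by
  rw [← lintegral_map (f := fun y => f (y + e)) (by fun_prop) (measurable_const_mul _),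
    Real.map_volume_mul_left (inv_ne_zero ha.ne'), lintegral_smul_measure, smul_eq_mul,
    lintegral_add_right_eq_self f e, inv_inv, abs_of_pos ha]

@[simp]
lemma energyDist_self (μ : Measure ℝ) : energyDist μ μ = 0 := by
  simp [energyDist]

lemma energyDist_map_add_mul_sub (μ ν : Measure ℝ) [IsProbabilityMeasure μ]
    [IsProbabilityMeasure ν] {γ : ℝ} (hγ : 0 ≤ γ) (b c : ℝ) :
    energyDist (μ.map fun x => b + γ * (x - c)) (ν.map fun x => b + γ * (x - c)) =
      ENNReal.ofReal γ * energyDist μ ν := by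
  rcases hγ.eq_or_lt with rfl | hγ
  · simp [Measure.map_const]
  have haffine : ∀ t, (t - b) / γ + c = γ⁻¹ * t + (c - b / γ) := fun t => by ring
  simp only [energyDist, cdf_map_add_mul_sub hγ, haffine]
  exact lintegral_comp_inv_mul_add (f := fun y => ENNReal.ofReal ((cdf μ y - cdf ν y) ^ 2))
    (by fun_prop) hγ _

lemma ENNReal.le_pow_mul_of_forall_le_mul {d : ℕ → ℝ≥0∞} {c : ℝ≥0∞}
    (h : ∀ k, d (k + 1) ≤ c * d k) (k : ℕ) : d k ≤ c ^ k * d 0 := by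
  induction k with
  | zero => simp
  | succ k ih => calc
      d (k + 1) ≤ c * (c ^ k * d 0) := (h k).trans (by gcongr)
      _ = c ^ (k + 1) * d 0 := by rw [pow_succ', mul_assoc]

section Mixture

variable {ι : Type*} [Fintype ι] {w : ι → ℝ}

lemma isProbabilityMeasure_sum_smul {α : Type*} [MeasurableSpace α] (hw0 : ∀ i, 0 ≤ w i)
    (hw1 : ∑ i, w i = 1) (μ : ι → Measure α) (hμ : ∀ i, IsProbabilityMeasure (μ i)) :
    IsProbabilityMeasure (∑ i, ENNReal.ofReal (w i) • μ i) := by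
  constructor
  simp only [Measure.coe_finsetSum, Finset.sum_apply, Measure.smul_apply, measure_univ,
    smul_eq_mul, mul_one]
  rw [← ENNReal.ofReal_sum_of_nonneg fun i _ => hw0 i, hw1, ENNReal.ofReal_one]

lemma cdf_sum_smul (hw0 : ∀ i, 0 ≤ w i) (hw1 : ∑ i, w i = 1) (μ : ι → Measure ℝ)
    (hμ : ∀ i, IsProbabilityMeasure (μ i)) (t : ℝ) :
    cdf (∑ i, ENNReal.ofReal (w i) • μ i) t = ∑ i, w i * cdf (μ i) t := by
  have := isProbabilityMeasure_sum_smul hw0 hw1 μ hμ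
  simp only [cdf_eq_real, measureReal_def, Measure.coe_finsetSum, Finset.sum_apply,
    Measure.smul_apply, smul_eq_mul]
  rw [ENNReal.toReal_sum fun i _ => ENNReal.mul_ne_top ENNReal.ofReal_ne_top (measure_ne_top _ _)]
  simp only [ENNReal.toReal_mul, ENNReal.toReal_ofReal (hw0 _)]

lemma energyDist_sum_smul_le (hw0 : ∀ i, 0 ≤ w i) (hw1 : ∑ i, w i = 1) (μ ν : ι → Measure ℝ)
    (hμ : ∀ i, IsProbabilityMeasure (μ i)) (hν : ∀ i, IsProbabilityMeasure (ν i)) :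
    energyDist (∑ i, ENNReal.ofReal (w i) • μ i) (∑ i, ENNReal.ofReal (w i) • ν i) ≤
      ∑ i, ENNReal.ofReal (w i) * energyDist (μ i) (ν i) := by
  have hpt : ∀ x, ENNReal.ofReal ((cdf (∑ i, ENNReal.ofReal (w i) • μ i) x -
      cdf (∑ i, ENNReal.ofReal (w i) • ν i) x) ^ 2) ≤
      ∑ i, ENNReal.ofReal (w i) * ENNReal.ofReal ((cdf (μ i) x - cdf (ν i) x) ^ 2) := by
    intro x
    have hjensen : (∑ i, w i * (cdf (μ i) x - cdf (ν i) x)) ^ 2 ≤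
        ∑ i, w i * (cdf (μ i) x - cdf (ν i) x) ^ 2 :=
      (even_two.convexOn_pow (𝕜 := ℝ)).map_sum_le (fun i _ => hw0 i) hw1 fun _ _ => mem_univ _
    rw [cdf_sum_smul hw0 hw1 μ hμ, cdf_sum_smul hw0 hw1 ν hν, ← Finset.sum_sub_distrib]
    simp_rw [← mul_sub, ← ENNReal.ofReal_mul (hw0 _)]
    rw [← ENNReal.ofReal_sum_of_nonneg fun i _ => mul_nonneg (hw0 i) (sq_nonneg _)]
    exact ENNReal.ofReal_le_ofReal hjensen
  calc _ ≤ ∫⁻ x, ∑ i, ENNReal.ofReal (w i) * ENNReal.ofReal ((cdf (μ i) x - cdf (ν i) x) ^ 2) :=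
        lintegral_mono hpt
    _ = _ := by
      rw [lintegral_finsetSum' _ fun i _ => by fun_prop]
      simp_rw [lintegral_const_mul' _ _ ENNReal.ofReal_ne_top, energyDist]

end Mixture

section SoftBellman

variable {S A : Type*} [Fintype S] [Fintype A]
  (r : S × A → ℝ) (P : S × A → S → ℝ) (pol : S → A → ℝ) (γ α : ℝ)

lemma softDistBellman_apply (Z : S × A → Measure ℝ) (p : S × A) :
    softDistBellman r P pol γ α Z p = ∑ q : S × A, ENNReal.ofReal (P p q.1 * pol q.1 q.2) •
      (Z q).map fun x => r p + γ * (x - α * Real.log (pol q.1 q.2)) := by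
  rw [softDistBellman, Fintype.sum_prod_type]

variable {P pol}

lemma sum_prod_mul_eq_one (p : S × A) (hP1 : ∑ s', P p s' = 1) (hpol1 : ∀ s, ∑ a, pol s a = 1) :
    ∑ q : S × A, P p q.1 * pol q.1 q.2 = 1 := by
  simp [Fintype.sum_prod_type, ← Finset.mul_sum, hpol1, hP1]

lemma isProbabilityMeasure_softDistBellman (hP0 : ∀ p s', 0 ≤ P p s')
    (hP1 : ∀ p, ∑ s', P p s' = 1) (hpol0 : ∀ s a, 0 ≤ pol s a) (hpol1 : ∀ s, ∑ a, pol s a = 1)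
    (Z : S × A → Measure ℝ) (hZ : ∀ p, IsProbabilityMeasure (Z p)) (p : S × A) :
    IsProbabilityMeasure (softDistBellman r P pol γ α Z p) := by
  rw [softDistBellman_apply]
  exact isProbabilityMeasure_sum_smul (fun q : S × A => mul_nonneg (hP0 p q.1) (hpol0 q.1 q.2))
    (sum_prod_mul_eq_one p (hP1 p) hpol1) _
    fun q => Measure.isProbabilityMeasure_map (by fun_prop)

lemma iSup_energyDist_softDistBellman_le (hP0 : ∀ p s', 0 ≤ P p s')
    (hP1 : ∀ p, ∑ s', P p s' = 1) (hpol0 : ∀ s a, 0 ≤ pol s a) (hpol1 : ∀ s, ∑ a, pol s a = 1)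
    (hγ : 0 ≤ γ) (Z Z' : S × A → Measure ℝ) (hZ : ∀ p, IsProbabilityMeasure (Z p))
    (hZ' : ∀ p, IsProbabilityMeasure (Z' p)) :
    ⨆ p, energyDist (softDistBellman r P pol γ α Z p) (softDistBellman r P pol γ α Z' p) ≤
      ENNReal.ofReal γ * ⨆ p, energyDist (Z p) (Z' p) := by
  refine iSup_le fun p => ?_
  have hw0 : ∀ q : S × A, 0 ≤ P p q.1 * pol q.1 q.2 := fun q =>
    mul_nonneg (hP0 p q.1) (hpol0 q.1 q.2)
  have hw1 := sum_prod_mul_eq_one p (hP1 p) hpol1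
  rw [softDistBellman_apply, softDistBellman_apply]
  calc _ ≤ ∑ q : S × A, ENNReal.ofReal (P p q.1 * pol q.1 q.2) *
        energyDist ((Z q).map fun x => r p + γ * (x - α * Real.log (pol q.1 q.2)))
          ((Z' q).map fun x => r p + γ * (x - α * Real.log (pol q.1 q.2))) :=
        energyDist_sum_smul_le hw0 hw1 _ _
          (fun q => Measure.isProbabilityMeasure_map (by fun_prop))
          fun q => Measure.isProbabilityMeasure_map (by fun_prop)
    _ ≤ ∑ q : S × A, ENNReal.ofReal (P p q.1 * pol q.1 q.2) *
        (ENNReal.ofReal γ * ⨆ p, energyDist (Z p) (Z' p)) := by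
      gcongr with q
      rw [energyDist_map_add_mul_sub _ _ hγ]
      gcongr
      exact le_iSup (fun q => energyDist (Z q) (Z' q)) q
    _ = ENNReal.ofReal γ * ⨆ p, energyDist (Z p) (Z' p) := by
      rw [← Finset.sum_mul, ← ENNReal.ofReal_sum_of_nonneg fun q _ => hw0 q, hw1,
        ENNReal.ofReal_one, one_mul]

end SoftBellman

theorem softDistBellman_iterate_tendsto_general {S A : Type*}
    [Fintype S] [Fintype A]
    (r : S × A → ℝ) (P : S × A → S → ℝ) (pol : S → A → ℝ)
    (hP0 : ∀ p s', 0 ≤ P p s') (hP1 : ∀ p, ∑ s', P p s' = 1)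
    (hpol0 : ∀ s a, 0 < pol s a) (hpol1 : ∀ s, ∑ a, pol s a = 1)
    (γ α : ℝ) (hγ0 : 0 ≤ γ) (hγ1 : γ < 1)
    (Zstar : S × A → Measure ℝ) [∀ p, IsProbabilityMeasure (Zstar p)]
    (hZstarInt : ∀ p, Integrable (fun x : ℝ => x) (Zstar p))
    (hfix : softDistBellman r P pol γ α Zstar = Zstar)
    (Z₀ : S × A → Measure ℝ) [∀ p, IsProbabilityMeasure (Z₀ p)]
    (hZ₀Int : ∀ p, Integrable (fun x : ℝ => x) (Z₀ p))
    (Zseq : ℕ → S × A → Measure ℝ) (hZseq0 : Zseq 0 = Z₀)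
    (hZseq : ∀ k, Zseq (k + 1) = softDistBellman r P pol γ α (Zseq k)) :
    (∀ k, (⨆ p : S × A, energyDist (Zseq k p) (Zstar p)) ≤
        ENNReal.ofReal γ ^ k * ⨆ p : S × A, energyDist (Z₀ p) (Zstar p)) ∧
      Tendsto (fun k => ⨆ p : S × A, energyDist (Zseq k p) (Zstar p)) atTop (𝓝 0) := by
  have hpol0' : ∀ s a, 0 ≤ pol s a := fun s a => (hpol0 s a).le
  have hprob : ∀ k p, IsProbabilityMeasure (Zseq k p) := by
    intro k
    induction k with
    | zero => intro p; rw [hZseq0]; infer_instance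
    | succ k ih =>
      rw [hZseq k]
      exact isProbabilityMeasure_softDistBellman r γ α hP0 hP1 hpol0' hpol1 _ ih
  have hstep : ∀ k, ⨆ p, energyDist (Zseq (k + 1) p) (Zstar p) ≤
      ENNReal.ofReal γ * ⨆ p, energyDist (Zseq k p) (Zstar p) := fun k =>
    calc _ = ⨆ p, energyDist (softDistBellman r P pol γ α (Zseq k) p)
          (softDistBellman r P pol γ α Zstar p) := by rw [hZseq, hfix]
      _ ≤ _ := iSup_energyDist_softDistBellman_le r γ α hP0 hP1 hpol0' hpol1 hγ0 _ _ (hprob k)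
          inferInstance
  have hbound : ∀ k, ⨆ p, energyDist (Zseq k p) (Zstar p) ≤
      ENNReal.ofReal γ ^ k * ⨆ p, energyDist (Z₀ p) (Zstar p) :=
    hZseq0 ▸ ENNReal.le_pow_mul_of_forall_le_mul hstep
  refine ⟨hbound, tendsto_of_tendsto_of_tendsto_of_le_of_le tendsto_const_nhds ?_
    (fun _ => zero_le) hbound⟩
  have hfin : ⨆ p, energyDist (Z₀ p) (Zstar p) ≠ ∞ :=
    iSup_ne_top fun p => (energyDist_lt_top _ _ (hZ₀Int p) (hZstarInt p)).ne
  simpa using ENNReal.Tendsto.mul_const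
    (ENNReal.tendsto_pow_atTop_nhds_zero_of_lt_one (ENNReal.ofReal_lt_one.2 hγ1)) (Or.inr hfin)

/-- Iterating the soft distributional Bellman operator converges geometrically, in the
supremal energy distance, to any fixed point `Z*` with finite first moments. -/
theorem softDistBellman_iterate_tendsto {S A : Type*}
    [Fintype S] [Fintype A] [Nonempty S] [Nonempty A]
    (r : S × A → ℝ) (P : S × A → S → ℝ) (pol : S → A → ℝ)
    (hP0 : ∀ p s', 0 ≤ P p s') (hP1 : ∀ p, ∑ s', P p s' = 1)
    (hpol0 : ∀ s a, 0 < pol s a) (hpol1 : ∀ s, ∑ a, pol s a = 1)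
    (γ α : ℝ) (hγ0 : 0 ≤ γ) (hγ1 : γ < 1) (hα : 0 ≤ α)
    (Zstar : S × A → Measure ℝ) [∀ p, IsProbabilityMeasure (Zstar p)]
    (hZstarInt : ∀ p, Integrable (fun x : ℝ => x) (Zstar p))
    (hfix : softDistBellman r P pol γ α Zstar = Zstar)
    (Z₀ : S × A → Measure ℝ) [∀ p, IsProbabilityMeasure (Z₀ p)]
    (hZ₀Int : ∀ p, Integrable (fun x : ℝ => x) (Z₀ p))
    (Zseq : ℕ → S × A → Measure ℝ) (hZseq0 : Zseq 0 = Z₀)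
    (hZseq : ∀ k, Zseq (k + 1) = softDistBellman r P pol γ α (Zseq k)) :
    (∀ k, (⨆ p : S × A, energyDist (Zseq k p) (Zstar p)) ≤
        ENNReal.ofReal γ ^ k * ⨆ p : S × A, energyDist (Z₀ p) (Zstar p)) ∧
      Tendsto (fun k => ⨆ p : S × A, energyDist (Zseq k p) (Zstar p)) atTop (𝓝 0) :=
  softDistBellman_iterate_tendsto_general r P pol hP0 hP1 hpol0 hpol1 γ α hγ0 hγ1 Zstar hZstarInt
    hfix Z₀ hZ₀Int Zseq hZseq0 hZseq
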